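/- arXiv:math/0408152 — 2 statements merged into one kernel-verified Lean document; each statement's English description precedes it below -/
import Mathlib

section
/- Let g be a finite-dimensional real vector space with inner product g0, let h ⊆ g be a subspace, let k ⊆ g be a subspace with h ⊥ k, and let j : h → k be a linear map with g0-transpose j^t : g → h (so j^t vanishes on the orthogonal complement of k and maps into h). Define the inner product g_j = (Id + j^t)^* g0. Then the subspace S = { X − j^t(X) : X ∈ k } is g_j-orthogonal to h, and the linear map S → k given by X − j^t(X) ↦ X is a linear isometry from (S, g_j|_S) to (k, g0|_k). -/
open scoped RealInnerProductSpace

/-! Because `h ⊥ k`, the transpose `jt` vanishes on `h`; as it takes values in `h`, this gives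
`jt ∘ jt = 0`. Hence `Id + jt` fixes `h` and inverts `X ↦ X - jt X`, so `g_j` restricted to
`S + h` is just `g0` transported along these maps, and both claims reduce to `h ⊥ k`. -/

section Transpose

variable {g : Type*} [NormedAddCommGroup g] [InnerProductSpace ℝ g] {h k : Submodule ℝ g}
  {j : h →ₗ[ℝ] k} {jt : g →ₗ[ℝ] h}

theorem transpose_apply_eq_zero_of_mem (horth : ∀ (Z : h) (X : k), ⟪(Z : g), (X : g)⟫ = 0)
    (htranspose : ∀ (X : g) (Z : h), ⟪((jt X : h) : g), (Z : g)⟫ = ⟪X, ((j Z : k) : g)⟫)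
    {Z : g} (hZ : Z ∈ h) : jt Z = 0 := by
  have hself : ⟪((jt Z : h) : g), ((jt Z : h) : g)⟫ = 0 := by
    rw [htranspose]
    exact horth ⟨Z, hZ⟩ _
  exact Subtype.ext (inner_self_eq_zero.mp hself)

theorem sub_transpose_add_transpose_sub (horth : ∀ (Z : h) (X : k), ⟪(Z : g), (X : g)⟫ = 0)
    (htranspose : ∀ (X : g) (Z : h), ⟪((jt X : h) : g), (Z : g)⟫ = ⟪X, ((j Z : k) : g)⟫)
    (X : g) : (X - ((jt X : h) : g)) + ((jt (X - ((jt X : h) : g)) : h) : g) = X := by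
  rw [map_sub, transpose_apply_eq_zero_of_mem horth htranspose (jt X).2]
  simp

end Transpose

theorem stmt_1_general
    {g : Type*} [NormedAddCommGroup g] [InnerProductSpace ℝ g]
    (h k : Submodule ℝ g)
    (horth : ∀ (Z : h) (X : k), ⟪(Z : g), (X : g)⟫ = 0)
    (j : h →ₗ[ℝ] k) (jt : g →ₗ[ℝ] h)
    (htranspose : ∀ (X : g) (Z : h), ⟪((jt X : h) : g), (Z : g)⟫ = ⟪X, ((j Z : k) : g)⟫) :
    -- `S` is `g_j`-orthogonal to `h`:
    (∀ (X : k) (Z : h),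
      ⟪((X : g) - ((jt (X : g) : h) : g)) + ((jt ((X : g) - ((jt (X : g) : h) : g)) : h) : g),
        (Z : g) + ((jt (Z : g) : h) : g)⟫ = 0) ∧
    -- `X - jt X ↦ X` is a linear isometry from `(S, g_j|_S)` to `(k, g0|_k)`:
    (∀ (X Y : k),
      ⟪((X : g) - ((jt (X : g) : h) : g)) + ((jt ((X : g) - ((jt (X : g) : h) : g)) : h) : g),
        ((Y : g) - ((jt (Y : g) : h) : g)) + ((jt ((Y : g) - ((jt (Y : g) : h) : g)) : h) : g)⟫ =
      ⟪(X : g), (Y : g)⟫) := by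
  refine ⟨fun X Z => ?_, fun X Y => ?_⟩
  · rw [sub_transpose_add_transpose_sub horth htranspose,
      transpose_apply_eq_zero_of_mem horth htranspose Z.2, ZeroMemClass.coe_zero, add_zero,
      real_inner_comm]
    exact horth Z X
  · rw [sub_transpose_add_transpose_sub horth htranspose,
      sub_transpose_add_transpose_sub horth htranspose]

/-- With `h ⊥ k`, `j : h → k`, and `jt : g → h` the `g0`-transpose of `j`,
the subspace `S = {X - jt X : X ∈ k}` is `g_j`-orthogonal to `h`, and
`X - jt X ↦ X` is a linear isometry from `(S, g_j)` to `(k, g0)`. -/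
theorem stmt_1
    {g : Type*} [NormedAddCommGroup g] [InnerProductSpace ℝ g] [FiniteDimensional ℝ g]
    (h k : Submodule ℝ g)
    (horth : ∀ (Z : h) (X : k), ⟪(Z : g), (X : g)⟫ = 0)
    (j : h →ₗ[ℝ] k) (jt : g →ₗ[ℝ] h)
    (htranspose : ∀ (X : g) (Z : h), ⟪((jt X : h) : g), (Z : g)⟫ = ⟪X, ((j Z : k) : g)⟫) :
    -- `S` is `g_j`-orthogonal to `h`:
    (∀ (X : k) (Z : h),
      ⟪((X : g) - ((jt (X : g) : h) : g)) + ((jt ((X : g) - ((jt (X : g) : h) : g)) : h) : g),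
        (Z : g) + ((jt (Z : g) : h) : g)⟫ = 0) ∧
    -- `X - jt X ↦ X` is a linear isometry from `(S, g_j|_S)` to `(k, g0|_k)`:
    (∀ (X Y : k),
      ⟪((X : g) - ((jt (X : g) : h) : g)) + ((jt ((X : g) - ((jt (X : g) : h) : g)) : h) : g),
        ((Y : g) - ((jt (Y : g) : h) : g)) + ((jt ((Y : g) - ((jt (Y : g) : h) : g)) : h) : g)⟫ =
      ⟪(X : g), (Y : g)⟫) :=
  stmt_1_general h k horth j jt htranspose
end

section
/- Let g be a compact Lie algebra whose outer automorphism group Out(g) = Aut(g)/Inn(g) is finite, let h be a real inner product space, and let F be a family of linear maps h → g that are pairwise nonequivalent (no two distinct j, j' ∈ F satisfy j(z) = Ad(A) j'(Cz) for some A ∈ G, C ∈ O(h)). Fix j0 ∈ F and suppose every j ∈ F with g_j isometric to g_{j0} satisfies: there exist an automorphism α of g and C ∈ O(h) with j(z) = α(j0(Cz)) for all z ∈ h. Then the set { j ∈ F : g_j is isometric to g_{j0} } has cardinality at most |Out(g)|; in particular it is finite. -/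
/-! If `j = α ∘ j₀ ∘ C` and `j' = α' ∘ j₀ ∘ C'`, then `j = (α α'⁻¹) ∘ j' ∘ (C'⁻¹ C)`. So when `α`
and `α'` differ by an inner automorphism, `j` and `j'` are equivalent, hence equal. Sending `j`
to the coset of `α` is therefore injective on the isometry class of `j₀`. -/

theorem eq_act_comp_trans_symm {G R E M : Type*} [Group G] [Semiring R]
    [AddCommMonoid M] [Module R M] [SeminormedAddCommGroup E] [Module R E]
    (act : G →* Module.End R M) {j j' j₀ : E → M} {α α' : G} {C C' : E ≃ₗᵢ[R] E}
    (hj : ∀ z, j z = act α (j₀ (C z))) (hj' : ∀ z, j' z = act α' (j₀ (C' z))) (z : E) :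
    j z = act (α * α'⁻¹) (j' ((C.trans C'.symm) z)) := by
  rw [hj, hj', LinearIsometryEquiv.trans_apply, LinearIsometryEquiv.apply_symm_apply,
    map_mul, Module.End.mul_apply, ← Module.End.mul_apply (act α'⁻¹), ← map_mul,
    inv_mul_cancel, map_one, Module.End.one_apply]

theorem stmt_15_general
    {g : Type*} [LieRing g] [LieAlgebra ℝ g]
    {h : Type*} [NormedAddCommGroup h] [InnerProductSpace ℝ h]
    {Aut : Type*} [Group Aut] (act : Aut →* (g →ₗ[ℝ] g))
    (N : Subgroup Aut) (hOutFin : Finite (Aut ⧸ N))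
    (F : Set (h →ₗ[ℝ] g)) (j₀ : h →ₗ[ℝ] g)
    -- `Isom j j'` stands for "`g_j` is isometric to `g_{j'}`"
    (Isom : (h →ₗ[ℝ] g) → (h →ₗ[ℝ] g) → Prop)
    -- the maps in F are pairwise nonequivalent
    (hpairwise : ∀ j ∈ F, ∀ j' ∈ F, j ≠ j' →
      ¬ ∃ α ∈ N, ∃ C : h ≃ₗᵢ[ℝ] h, ∀ z : h, j z = act α (j' (C z)))
    -- any isometry of the metrics comes from an automorphism of g and C ∈ O(h)
    (hiso : ∀ j ∈ F, Isom j j₀ →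
      ∃ (α : Aut) (C : h ≃ₗᵢ[ℝ] h), ∀ z : h, j z = act α (j₀ (C z))) :
    {j ∈ F | Isom j j₀}.Finite ∧
    Nat.card {j ∈ F | Isom j j₀} ≤ Nat.card (Aut ⧸ N) := by
  choose! α C hαC using hiso
  -- `Aut ⧸ N` consists of left cosets, and `α⁻¹ N = α'⁻¹ N` says exactly `α α'⁻¹ ∈ N`.
  let f : {j ∈ F | Isom j j₀} → Aut ⧸ N := fun j => ((α j)⁻¹ : Aut)
  have hf : Function.Injective f := by
    rintro ⟨j, hjF, hjI⟩ ⟨j', hj'F, hj'I⟩ hjj'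
    have hN : α j * (α j')⁻¹ ∈ N := by simpa using QuotientGroup.eq.mp hjj'
    by_contra hne
    exact hpairwise j hjF j' hj'F (fun e => hne (Subtype.ext e)) ⟨_, hN, _,
      eq_act_comp_trans_symm act (hαC j hjF hjI) (hαC j' hj'F hj'I)⟩
  have : Finite {j ∈ F | Isom j j₀} := Finite.of_injective f hf
  exact ⟨Set.toFinite _, Nat.card_le_card_of_injective f hf⟩

/-- Let `Aut` be the automorphism group of the compact Lie algebra `g`
(acting on `g` via `act`), `N ⊴ Aut` the inner automorphisms, with `Out = Aut/N` finite.
If `F` is a family of pairwise nonequivalent linear maps `h → g` (equivalence via an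
inner automorphism and an orthogonal map of `h`), `j₀ ∈ F`, and every `j ∈ F` whose
metric `g_j` is isometric to `g_{j₀}` satisfies `j = α ∘ j₀ ∘ C` for some automorphism
`α` and `C ∈ O(h)`, then `{j ∈ F : g_j isometric to g_{j₀}}` has at most `|Out|`
elements; in particular it is finite. -/
theorem stmt_15
    {g : Type*} [LieRing g] [LieAlgebra ℝ g]
    {h : Type*} [NormedAddCommGroup h] [InnerProductSpace ℝ h]
    {Aut : Type*} [Group Aut] (act : Aut →* (g →ₗ[ℝ] g))
    (hact_bracket : ∀ (α : Aut) (X Y : g), act α ⁅X, Y⁆ = ⁅act α X, act α Y⁆)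
    (hact_bij : ∀ α : Aut, Function.Bijective (act α))
    (N : Subgroup Aut) [N.Normal] (hOutFin : Finite (Aut ⧸ N))
    (F : Set (h →ₗ[ℝ] g)) (j₀ : h →ₗ[ℝ] g) (hj₀ : j₀ ∈ F)
    -- `Isom j j'` stands for "`g_j` is isometric to `g_{j'}`"
    (Isom : (h →ₗ[ℝ] g) → (h →ₗ[ℝ] g) → Prop)
    -- the maps in F are pairwise nonequivalent
    (hpairwise : ∀ j ∈ F, ∀ j' ∈ F, j ≠ j' →
      ¬ ∃ α ∈ N, ∃ C : h ≃ₗᵢ[ℝ] h, ∀ z : h, j z = act α (j' (C z)))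
    -- any isometry of the metrics comes from an automorphism of g and C ∈ O(h)
    (hiso : ∀ j ∈ F, Isom j j₀ →
      ∃ (α : Aut) (C : h ≃ₗᵢ[ℝ] h), ∀ z : h, j z = act α (j₀ (C z))) :
    {j ∈ F | Isom j j₀}.Finite ∧
    Nat.card {j ∈ F | Isom j j₀} ≤ Nat.card (Aut ⧸ N) :=
  stmt_15_general act N hOutFin F j₀ Isom hpairwise hiso
end
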